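/- Let q ≥ 1 and n ≥ 5, and let ℬ = {B_{i,j}^{(k)} : i, j ∈ {1,…,n}, k ∈ {1,…,q}}. For x_1, x_2, …, x_n ∈ ℬ, one has x_1 ∪ x_2 ∪ ⋯ ∪ x_n = A_n^q if and only if there exist k ∈ {1,…,q} and i ∈ {1,…,n} with {x_1,…,x_n} = {B_{i,1}^{(k)}, B_{i,2}^{(k)}, …, B_{i,n}^{(k)}}, or there exist k ∈ {1,…,q} and j ∈ {1,…,n} with {x_1,…,x_n} = {B_{1,j}^{(k)}, B_{2,j}^{(k)}, …, B_{n,j}^{(k)}}. -/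

import Mathlib

/-- The set of even derangements: fixed-point-free elements of the alternating group. -/
def evenDerangements (n : ℕ) : Set (alternatingGroup (Fin n)) :=
  {σ | ∀ i : Fin n, (σ : Equiv.Perm (Fin n)) i ≠ i}

lemma evenDerangements_inv {n : ℕ} {g : alternatingGroup (Fin n)}
    (hg : g ∈ evenDerangements n) : g⁻¹ ∈ evenDerangements n := by
  intro i hi
  apply hg i
  have h1 : ((g : Equiv.Perm (Fin n)))⁻¹ i = i := by
    simpa using hi
  conv_lhs => rw [← h1]
  simp

/-- The tensor power `AΓ_n^q` of the even derangement graph. -/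
def AGamma (n q : ℕ) : SimpleGraph (Fin q → alternatingGroup (Fin n)) where
  Adj σ τ := σ ≠ τ ∧ ∀ k, σ k * (τ k)⁻¹ ∈ evenDerangements n
  symm := by
    refine ⟨?_⟩
    rintro σ τ ⟨hne, h⟩
    refine ⟨hne.symm, fun k => ?_⟩
    have := evenDerangements_inv (h k)
    simpa [mul_inv_rev] using this
  loopless := ⟨fun σ h => h.1 rfl⟩

/-- The even derangement graph `AΓ_n`. -/
def AGammaOne (n : ℕ) : SimpleGraph (alternatingGroup (Fin n)) where
  Adj σ τ := σ ≠ τ ∧ σ * τ⁻¹ ∈ evenDerangements n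
  symm := by
    refine ⟨?_⟩
    rintro σ τ ⟨hne, h⟩
    refine ⟨hne.symm, ?_⟩
    have := evenDerangements_inv h
    simpa [mul_inv_rev] using this
  loopless := ⟨fun σ h => h.1 rfl⟩

/-- The maximum independent set candidates `B_{i,j}^{(k)}`. -/
def B (n q : ℕ) (i j : Fin n) (k : Fin q) : Set (Fin q → alternatingGroup (Fin n)) :=
  {σ | (σ k : Equiv.Perm (Fin n)) i = j}

/-- A set of vertices is independent if no two of its members are adjacent. -/
def IsIndep {V : Type*} (G : SimpleGraph V) (s : Set V) : Prop :=
  s.Pairwise fun u v => ¬ G.Adj u v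

/-!
Since `A_n` is transitive on `{1,…,n}`, every `B_{i,j}^{(k)}` has exactly `|A_n^q| / n`
elements, so `n` of them cover `A_n^q` only if they are pairwise disjoint. Since `A_n` is
moreover `2`-transitive for `n ≥ 4`, two of them are disjoint only if they have the same `k`
and share exactly one of the indices `i`, `j`. Finally, `n` index pairs any two of which share
exactly one coordinate form a full row or a full column.
-/

open Set Function

theorem Set.pairwise_disjoint_of_iUnion_eq_univ_of_sum_ncard_le {ι α : Type*} [Fintype ι]
    [Finite α] {s : ι → Set α} (hcover : ⋃ i, s i = univ)
    (hsum : ∑ i, (s i).ncard ≤ Nat.card α) : Pairwise (Disjoint on s) := by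
  classical
  intro a b hab
  by_contra hnd
  obtain ⟨c, hca, hcb⟩ := not_disjoint_iff.mp hnd
  -- `c` is still covered by `s b`, so deleting it from `s a` leaves a cover of smaller total size.
  have hcover' : ⋃ i, update s a (s a \ {c}) i = univ := by
    refine eq_univ_of_forall fun y => mem_iUnion.mpr ?_
    obtain ⟨i, hi⟩ := mem_iUnion.mp (hcover ▸ mem_univ y)
    by_cases hy : y = c
    · exact ⟨b, by simpa [hab.symm, hy] using hcb⟩
    by_cases hia : i = a
    · subst hia; exact ⟨i, by simpa [hy] using hi⟩
    · exact ⟨i, by simpa [hia] using hi⟩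
  have hsum' : ∑ i, (update s a (s a \ {c}) i).ncard + 1 = ∑ i, (s i).ncard := by
    rw [← Finset.add_sum_erase _ _ (Finset.mem_univ a),
      ← Finset.add_sum_erase _ _ (Finset.mem_univ a),
      Finset.sum_congr rfl fun i hi => by rw [update_of_ne (Finset.ne_of_mem_erase hi)],
      update_self, add_right_comm, ncard_sdiff_singleton_add_one hca]
  have := ncard_iUnion_le_of_fintype (update s a (s a \ {c}))
  rw [hcover', ncard_univ] at this
  omega

namespace alternatingGroup

variable {α : Type*} [Fintype α] [DecidableEq α]

theorem exists_apply_eq (hα : 3 ≤ Fintype.card α) (a b : α) :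
    ∃ g : alternatingGroup α, (g : Equiv.Perm α) a = b := by
  have := isPretransitive_of_three_le_card α (by rwa [Nat.card_eq_fintype_card])
  exact MulAction.exists_smul_eq _ a b

theorem exists_apply_eq_and_apply_eq (hα : 4 ≤ Fintype.card α) {a a' b b' : α} (ha : a ≠ a')
    (hb : b ≠ b') :
    ∃ g : alternatingGroup α, (g : Equiv.Perm α) a = b ∧ (g : Equiv.Perm α) a' = b' := by
  have := isMultiplyPretransitive α
  have : MulAction.IsMultiplyPretransitive (alternatingGroup α) α 2 :=
    MulAction.isMultiplyPretransitive_of_le (n := Nat.card α - 2)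
      (by rw [Nat.card_eq_fintype_card]; omega) (Nat.sub_le _ _)
  exact MulAction.is_two_pretransitive_iff.mp this ha hb

end alternatingGroup

section B

variable {n q : ℕ}

theorem iUnion_B_right (i : Fin n) (k : Fin q) : ⋃ j, B n q i j k = univ :=
  eq_univ_of_forall fun _ => mem_iUnion.mpr ⟨_, rfl⟩

theorem iUnion_B_left (j : Fin n) (k : Fin q) : ⋃ i, B n q i j k = univ :=
  eq_univ_of_forall fun σ => mem_iUnion.mpr ⟨(σ k : Equiv.Perm (Fin n)).symm j, by simp [B]⟩

theorem pairwise_disjoint_B_right (i : Fin n) (k : Fin q) :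
    Pairwise (Disjoint on fun j => B n q i j k) :=
  fun _ _ hjj' => disjoint_left.mpr fun _ hj hj' => hjj' (hj.symm.trans hj')

theorem ncard_B_eq_ncard_B_right (hn : 3 ≤ n) (i j j' : Fin n) (k : Fin q) :
    (B n q i j k).ncard = (B n q i j' k).ncard := by
  obtain ⟨g, hg⟩ := alternatingGroup.exists_apply_eq (by simpa using hn) j' j
  have hpre : B n q i j' k = (Pi.mulSingle k g * ·) ⁻¹' B n q i j k := by
    ext σ
    simp only [B, mem_preimage, mem_ofPred_eq, Pi.mul_apply, Pi.mulSingle_eq_same,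
      Subgroup.coe_mul, Equiv.Perm.mul_apply, ← hg, (g : Equiv.Perm (Fin n)).injective.eq_iff]
  rw [hpre, ncard_preimage_of_injective_subset_range (mul_right_injective _)
    (by simp [(mul_left_surjective _).range_eq])]

theorem card_mul_ncard_B (hn : 3 ≤ n) (i j : Fin n) (k : Fin q) :
    n * (B n q i j k).ncard = Nat.card (Fin q → alternatingGroup (Fin n)) := by
  calc n * (B n q i j k).ncard = ∑ j', (B n q i j' k).ncard := by
        simp [ncard_B_eq_ncard_B_right hn i _ j k]
    _ = (⋃ j', B n q i j' k).ncard := by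
        rw [ncard_iUnion_of_finite (fun _ => toFinite _) (pairwise_disjoint_B_right i k),
          finsum_eq_sum_of_fintype]
    _ = Nat.card (Fin q → alternatingGroup (Fin n)) := by rw [iUnion_B_right, ncard_univ]

theorem eq_and_xor_of_disjoint_B (hn : 4 ≤ n) {i j i' j' : Fin n} {k k' : Fin q}
    (h : Disjoint (B n q i j k) (B n q i' j' k')) : k = k' ∧ Xor (i = i') (j = j') := by
  have hn3 : 3 ≤ Fintype.card (Fin n) := by simp only [Fintype.card_fin]; omega
  obtain ⟨g, hg⟩ := alternatingGroup.exists_apply_eq hn3 i j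
  have hk : k = k' := by
    by_contra hk
    obtain ⟨g', hg'⟩ := alternatingGroup.exists_apply_eq hn3 i' j'
    exact disjoint_left.mp h (show update (fun _ => g') k g ∈ B n q i j k by simpa [B] using hg)
      (by simpa [B, Ne.symm hk] using hg')
  subst hk
  refine ⟨rfl, ?_⟩
  rcases eq_or_ne i i' with rfl | hi <;> rcases eq_or_ne j j' with rfl | hj
  · exact absurd h (not_disjoint_iff.mpr ⟨fun _ => g, hg, hg⟩)
  · exact .inl ⟨rfl, hj⟩
  · exact .inr ⟨rfl, hi⟩
  · obtain ⟨g, hgi, hgi'⟩ :=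
      alternatingGroup.exists_apply_eq_and_apply_eq (by simpa using hn) hi hj
    exact absurd h (not_disjoint_iff.mpr ⟨fun _ => g, hgi, hgi'⟩)

theorem pairwise_disjoint_of_iUnion_B_eq_univ (hn : 3 ≤ n) {i j : Fin n → Fin n}
    {k : Fin n → Fin q} (hcover : ⋃ m, B n q (i m) (j m) (k m) = univ) :
    Pairwise (Disjoint on fun m => B n q (i m) (j m) (k m)) := by
  refine pairwise_disjoint_of_iUnion_eq_univ_of_sum_ncard_le hcover (le_of_eq ?_)
  refine Nat.eq_of_mul_eq_mul_left (by omega : 0 < n) ?_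
  simp [Finset.mul_sum, card_mul_ncard_B hn]

end B

theorem forall_eq_and_injective_or_of_pairwise_xor {ι α β : Type*} {f : ι → α}
    {g : ι → β} (h : Pairwise fun a b => Xor (f a = f b) (g a = g b)) :
    ((∀ a b, f a = f b) ∧ Injective g) ∨ ((∀ a b, g a = g b) ∧ Injective f) := by
  have hinj_g (hf : ∀ a b, f a = f b) : Injective g := fun a b hab => by
    by_contra hne
    exact ((h hne).resolve_left fun h' => h'.2 hab).2 (hf a b)
  by_cases hf : ∀ a b, f a = f b
  · exact .inl ⟨hf, hinj_g hf⟩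
  obtain ⟨a, b, hfab⟩ : ∃ a b, f a ≠ f b := by simpa using hf
  have hab : a ≠ b := fun hab => hfab (congrArg f hab)
  have hgab : g a = g b := ((h hab).resolve_left fun h' => hfab h'.1).1
  -- Any `c` off the column of `a` would share its row with both `a` and `b`.
  have hg : ∀ c, g c = g a := fun c => by
    by_contra hc
    have hca : f c = f a := by
      rcases eq_or_ne c a with rfl | hca; · rfl
      exact ((h hca).resolve_right fun h' => hc h'.1).1
    have hcb : f c = f b := by
      rcases eq_or_ne c b with rfl | hcb; · rfl
      exact ((h hcb).resolve_right fun h' => hc (h'.1.trans hgab.symm)).1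
    exact hfab (hca.symm.trans hcb)
  refine .inr ⟨fun c d => (hg c).trans (hg d).symm, fun c d hcd => ?_⟩
  by_contra hne
  exact ((h hne).resolve_right fun h' => h'.2 hcd).2 ((hg c).trans (hg d).symm)

theorem B_cover_iff_row_or_column_general (n q : ℕ) (hn : 5 ≤ n)
    (x : Fin n → Set (Fin q → alternatingGroup (Fin n)))
    (hx : ∀ m : Fin n, ∃ (i j : Fin n) (k : Fin q), x m = B n q i j k) :
    (⋃ m, x m) = Set.univ ↔
      (∃ (k : Fin q) (i : Fin n), Set.range x = Set.range fun j => B n q i j k) ∨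
      (∃ (k : Fin q) (j : Fin n), Set.range x = Set.range fun i => B n q i j k) := by
  constructor
  · intro hcover
    choose i j k hxm using hx
    obtain rfl : x = fun m => B n q (i m) (j m) (k m) := funext hxm
    have hB : Pairwise fun a b => k a = k b ∧ Xor (i a = i b) (j a = j b) := fun a b hab =>
      eq_and_xor_of_disjoint_B (by omega)
        (pairwise_disjoint_of_iUnion_B_eq_univ (by omega) hcover hab)
    let m₀ : Fin n := ⟨0, by omega⟩
    have hk m : k m = k m₀ := by
      rcases eq_or_ne m m₀ with rfl | hm
      exacts [rfl, (hB hm).1]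
    rcases forall_eq_and_injective_or_of_pairwise_xor fun a b hab => (hB hab).2 with
      ⟨hi, hj⟩ | ⟨hj, hi⟩
    · refine .inl ⟨k m₀, i m₀, ?_⟩
      rw [← (Finite.injective_iff_surjective.mp hj).range_comp
        fun j' => B n q (i m₀) j' (k m₀)]
      exact congrArg range (funext fun m => by simp [hi m m₀, hk m])
    · refine .inr ⟨k m₀, j m₀, ?_⟩
      rw [← (Finite.injective_iff_surjective.mp hi).range_comp
        fun i' => B n q i' (j m₀) (k m₀)]
      exact congrArg range (funext fun m => by simp [hj m m₀, hk m])
  · rintro (⟨k, i, hrow⟩ | ⟨k, j, hcol⟩)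
    · rw [← sUnion_range, hrow, sUnion_range, iUnion_B_right]
    · rw [← sUnion_range, hcol, sUnion_range, iUnion_B_left]

/-- `n` members of `ℬ` cover `A_n^q` iff they form a row `ℛ_i^{(k)}` or a
column `𝒞_j^{(k)}`. -/
theorem B_cover_iff_row_or_column (n q : ℕ) (hq : 1 ≤ q) (hn : 5 ≤ n)
    (x : Fin n → Set (Fin q → alternatingGroup (Fin n)))
    (hx : ∀ m : Fin n, ∃ (i j : Fin n) (k : Fin q), x m = B n q i j k) :
    (⋃ m, x m) = Set.univ ↔
      (∃ (k : Fin q) (i : Fin n), Set.range x = Set.range fun j => B n q i j k) ∨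
      (∃ (k : Fin q) (j : Fin n), Set.range x = Set.range fun i => B n q i j k) :=
  B_cover_iff_row_or_column_general n q hn x hx
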